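/- Let X be a complex separable Banach space and let T ∈ B(X) be invertible and transitive (no nontrivial closed invariant subspace). Let x₀ ∈ X be nonzero with 𝔑 ≠ X, where 𝔑 is the closed linear span of {xₙ : n ≥ 1}, xₙ = T^{−n}x₀, and let x₁* ∈ X* satisfy ⟨x₁*, xₙ⟩ = δ₁ₙ for all n ≥ 1. Define T₁ ∈ B(X) by T₁x = Tx − ⟨x₁*, x⟩x₀. Then: (1) 𝔑 is invariant under both T₁ and T⁻¹; (2) the quotient operators satisfy (T⁻¹)^𝔑 ∘ T₁^𝔑 = I on X/𝔑; (3) x₀ ∉ 𝔑, the coset x₀ + 𝔑 lies in ker((T⁻¹)^𝔑), and x₀ + 𝔑 is a cyclic vector of T₁^𝔑, i.e., the closed linear span of {(T₁^𝔑)ᵏ(x₀+𝔑) : k ≥ 0} equals X/𝔑. -/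

import Mathlib

/-!
Write `S = T⁻¹`, `xₙ = Sⁿ x₀` and `T₁ = T - x₁* ⊗ x₀`. Since `T xₙ₊₁ = xₙ` and `x₁*` is
biorthogonal to `(xₙ)ₙ≥₁`, `T₁` kills `x₁` and shifts `xₙ₊₁ ↦ xₙ` for `n ≥ 1`, so the closed span
`𝔑` of these vectors is `T₁`-invariant; `S`-invariance is clear, and `S T₁ = I - x₁* ⊗ x₁` with
`x₁ ∈ 𝔑` gives `(T⁻¹)^𝔑 T₁^𝔑 = I`. If `x₀` lay in `𝔑`, then `𝔑` would be `T`-invariant,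
contradicting transitivity. Finally, the preimage in `X` of the closed `T₁^𝔑`-cyclic subspace
generated by `x₀ + 𝔑` is closed, contains `x₀ ≠ 0`, and is `T`-invariant because `T` and `T₁`
differ by multiples of `x₀`; by transitivity it is all of `X`.
-/

/-- `𝔑₋ₖ`: the closed linear span of `{S^n x₀ : n ≥ k}` (here `S = T⁻¹`). -/
def closedSpanOrbitFrom {X : Type*} [NormedAddCommGroup X] [NormedSpace ℂ X]
    (S : X →L[ℂ] X) (x₀ : X) (k : ℕ) : Submodule ℂ X :=
  (Submodule.span ℂ {y : X | ∃ n : ℕ, k ≤ n ∧ y = (S ^ n) x₀}).topologicalClosure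

/-- `T` is transitive: it has no nontrivial closed invariant subspace. -/
def IsTransitiveOp {X : Type*} [NormedAddCommGroup X] [NormedSpace ℂ X]
    (T : X →L[ℂ] X) : Prop :=
  ∀ Y : Submodule ℂ X, IsClosed (Y : Set X) → (∀ x ∈ Y, T x ∈ Y) → Y = ⊥ ∨ Y = ⊤

open Submodule

section ClosedSpan

variable {𝕜 E F : Type*} [Semiring 𝕜] [AddCommMonoid E] [Module 𝕜 E] [TopologicalSpace E]
  [AddCommMonoid F] [Module 𝕜 F] [TopologicalSpace F] [ContinuousAdd E] [ContinuousConstSMul 𝕜 E]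

theorem Submodule.topologicalClosure_span_le_comap (A : E →L[𝕜] F) {s : Set E}
    {M : Submodule 𝕜 F} (hM : IsClosed (M : Set F)) (hs : Set.MapsTo A s M) :
    (span 𝕜 s).topologicalClosure ≤ M.comap (A : E →ₗ[𝕜] F) :=
  topologicalClosure_minimal _ (span_le.2 hs) (hM.preimage A.continuous)

end ClosedSpan

section CyclicSubspace

variable {𝕜 E : Type*} [Semiring 𝕜] [AddCommMonoid E] [Module 𝕜 E] [TopologicalSpace E]
  [ContinuousAdd E] [ContinuousConstSMul 𝕜 E]

def closedCyclicSubspace (A : E →L[𝕜] E) (v : E) : Submodule 𝕜 E :=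
  (span 𝕜 (Set.range fun k : ℕ => (A ^ k) v)).topologicalClosure

variable (A : E →L[𝕜] E) (v : E)

theorem isClosed_closedCyclicSubspace : IsClosed (closedCyclicSubspace A v : Set E) :=
  isClosed_topologicalClosure _

theorem pow_apply_mem_closedCyclicSubspace (k : ℕ) : (A ^ k) v ∈ closedCyclicSubspace A v :=
  le_topologicalClosure _ (subset_span ⟨k, rfl⟩)

theorem self_mem_closedCyclicSubspace : v ∈ closedCyclicSubspace A v :=
  pow_apply_mem_closedCyclicSubspace A v 0

theorem closedCyclicSubspace_le_comap :
    closedCyclicSubspace A v ≤ (closedCyclicSubspace A v).comap (A : E →ₗ[𝕜] E) :=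
  topologicalClosure_span_le_comap A (isClosed_closedCyclicSubspace A v) <| by
    rintro _ ⟨k, rfl⟩
    have hk := pow_apply_mem_closedCyclicSubspace A v (k + 1)
    rwa [pow_succ', mul_apply_eq_comp] at hk

end CyclicSubspace

section OrbitSpan

variable {X : Type*} [NormedAddCommGroup X] [NormedSpace ℂ X] {T S : X →L[ℂ] X} {x₀ x : X}

theorem isClosed_closedSpanOrbitFrom (S : X →L[ℂ] X) (x₀ : X) (k : ℕ) :
    IsClosed (closedSpanOrbitFrom S x₀ k : Set X) :=
  isClosed_topologicalClosure _

theorem pow_apply_mem_closedSpanOrbitFrom (S : X →L[ℂ] X) (x₀ : X) {k n : ℕ} (h : k ≤ n) :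
    (S ^ n) x₀ ∈ closedSpanOrbitFrom S x₀ k :=
  le_topologicalClosure _ (subset_span ⟨n, h, rfl⟩)

theorem apply_self_mem_closedSpanOrbitFrom_one (S : X →L[ℂ] X) (x₀ : X) :
    S x₀ ∈ closedSpanOrbitFrom S x₀ 1 :=
  pow_apply_mem_closedSpanOrbitFrom S x₀ (n := 1) le_rfl

theorem closedSpanOrbitFrom_le_comap {A : X →L[ℂ] X} {k : ℕ}
    (hA : ∀ n, k ≤ n → A ((S ^ n) x₀) ∈ closedSpanOrbitFrom S x₀ k) :
    closedSpanOrbitFrom S x₀ k ≤ (closedSpanOrbitFrom S x₀ k).comap (A : X →ₗ[ℂ] X) :=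
  topologicalClosure_span_le_comap A (isClosed_closedSpanOrbitFrom S x₀ k) <| by
    rintro _ ⟨n, hn, rfl⟩
    exact hA n hn

theorem apply_mem_closedSpanOrbitFrom {k : ℕ} (hx : x ∈ closedSpanOrbitFrom S x₀ k) :
    S x ∈ closedSpanOrbitFrom S x₀ k :=
  closedSpanOrbitFrom_le_comap (fun n hn => by
    simpa only [pow_succ', mul_apply_eq_comp]
      using pow_apply_mem_closedSpanOrbitFrom S x₀ (hn.trans n.le_succ)) hx

theorem apply_pow_succ_apply_of_comp_eq_id (hTS : T.comp S = ContinuousLinearMap.id ℂ X) (n : ℕ) (x : X) :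
    T ((S ^ (n + 1)) x) = (S ^ n) x := by
  rw [pow_succ', mul_apply_eq_comp, ← ContinuousLinearMap.comp_apply, hTS,
    ContinuousLinearMap.id_apply]

theorem sub_smul_mem_closedSpanOrbitFrom_one (hTS : T.comp S = ContinuousLinearMap.id ℂ X)
    {f : X →L[ℂ] ℂ} (hf : ∀ n : ℕ, 1 ≤ n → f ((S ^ n) x₀) = if n = 1 then 1 else 0)
    (hx : x ∈ closedSpanOrbitFrom S x₀ 1) :
    T x - f x • x₀ ∈ closedSpanOrbitFrom S x₀ 1 := by
  refine closedSpanOrbitFrom_le_comap (A := T - f.smulRight x₀) (fun n hn => ?_) hx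
  obtain ⟨m, rfl⟩ := Nat.exists_eq_add_of_le' hn
  simp only [sub_apply, ContinuousLinearMap.smulRight_apply,
    apply_pow_succ_apply_of_comp_eq_id hTS, hf (m + 1) hn]
  rcases m.eq_zero_or_pos with rfl | hm
  · simp
  · simpa [hm.ne'] using pow_apply_mem_closedSpanOrbitFrom S x₀ hm

theorem apply_mem_closedSpanOrbitFrom_one_of_self_mem
    (hTS : T.comp S = ContinuousLinearMap.id ℂ X) (hx₀ : x₀ ∈ closedSpanOrbitFrom S x₀ 1)
    (hx : x ∈ closedSpanOrbitFrom S x₀ 1) : T x ∈ closedSpanOrbitFrom S x₀ 1 := by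
  refine closedSpanOrbitFrom_le_comap (fun n hn => ?_) hx
  obtain ⟨m, rfl⟩ := Nat.exists_eq_add_of_le' hn
  rw [apply_pow_succ_apply_of_comp_eq_id hTS]
  rcases m.eq_zero_or_pos with rfl | hm
  · simpa using hx₀
  · exact pow_apply_mem_closedSpanOrbitFrom S x₀ hm

theorem IsTransitiveOp.self_notMem_closedSpanOrbitFrom_one (htrans : IsTransitiveOp T)
    (hTS : T.comp S = ContinuousLinearMap.id ℂ X) (hx₀ : x₀ ≠ 0)
    (hN : closedSpanOrbitFrom S x₀ 1 ≠ ⊤) : x₀ ∉ closedSpanOrbitFrom S x₀ 1 := by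
  intro hx₀N
  rcases htrans _ (isClosed_closedSpanOrbitFrom S x₀ 1)
      (fun x => apply_mem_closedSpanOrbitFrom_one_of_self_mem hTS hx₀N) with hbot | htop
  · have hSx₀ : S x₀ = 0 := by
      simpa [hbot] using apply_self_mem_closedSpanOrbitFrom_one S x₀
    exact hx₀ (by simpa [hSx₀] using (apply_pow_succ_apply_of_comp_eq_id hTS 0 x₀).symm)
  · exact hN htop

end OrbitSpan

section Quotient

variable {X : Type*} [NormedAddCommGroup X] [NormedSpace ℂ X] {T S : X →L[ℂ] X} {x₀ : X}
  {f : X →L[ℂ] ℂ} {Y : Submodule ℂ X}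

theorem comp_eq_id_of_lifts_quotient (hST : S.comp T = ContinuousLinearMap.id ℂ X)
    (hSx₀ : S x₀ ∈ Y) {Sq T1q : (X ⧸ Y) →L[ℂ] (X ⧸ Y)}
    (hSq : ∀ x : X, Sq (Submodule.Quotient.mk x) = Submodule.Quotient.mk (S x))
    (hT1q : ∀ x : X, T1q (Submodule.Quotient.mk x) = Submodule.Quotient.mk (T x - f x • x₀)) :
    Sq.comp T1q = ContinuousLinearMap.id ℂ (X ⧸ Y) := by
  ext1 q
  obtain ⟨x, rfl⟩ := Submodule.Quotient.mk_surjective Y q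
  have hSTx : S (T x) = x := by simpa using congr($hST x)
  simp [hT1q, hSq, hSTx, (Submodule.Quotient.mk_eq_zero Y).2 hSx₀]

theorem IsTransitiveOp.closedCyclicSubspace_mk_eq_top (htrans : IsTransitiveOp T)
    (hx₀ : x₀ ≠ 0) {Q : (X ⧸ Y) →L[ℂ] (X ⧸ Y)}
    (hQ : ∀ x : X, Q (Submodule.Quotient.mk x) = Submodule.Quotient.mk (T x - f x • x₀)) :
    closedCyclicSubspace Q (Submodule.Quotient.mk x₀) = ⊤ := by
  set C := closedCyclicSubspace Q (Submodule.Quotient.mk x₀ : X ⧸ Y)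
  have hT : ∀ x ∈ C.comap Y.mkQ, T x ∈ C.comap Y.mkQ := fun x hx => by
    have hmk : (Submodule.Quotient.mk (T x) : X ⧸ Y) =
        Q (Submodule.Quotient.mk x) + f x • Submodule.Quotient.mk x₀ := by
      simp [hQ]
    simpa [hmk] using C.add_mem (closedCyclicSubspace_le_comap Q _ hx)
      (C.smul_mem (f x) (self_mem_closedCyclicSubspace Q _))
  rcases htrans _ ((isClosed_closedCyclicSubspace Q _).preimage Y.continuous_mkQ) hT with
    hbot | htop
  · exact absurd (hbot ▸ self_mem_closedCyclicSubspace Q _ : x₀ ∈ (⊥ : Submodule ℂ X))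
      (by simpa using hx₀)
  · rw [eq_top_iff']
    intro q
    obtain ⟨x, rfl⟩ := Submodule.Quotient.mk_surjective Y q
    exact (htop ▸ Submodule.mem_top : x ∈ C.comap Y.mkQ)

end Quotient

theorem quotient_operators_properties_general
    (X : Type*) [NormedAddCommGroup X] [NormedSpace ℂ X]
    (T S : X →L[ℂ] X)
    (hTS : T.comp S = ContinuousLinearMap.id ℂ X)
    (hST : S.comp T = ContinuousLinearMap.id ℂ X)
    (htrans : IsTransitiveOp T)
    (x₀ : X) (hx₀ : x₀ ≠ 0)
    (hN : closedSpanOrbitFrom S x₀ 1 ≠ ⊤)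
    (f : X →L[ℂ] ℂ)
    (hf : ∀ n : ℕ, 1 ≤ n → f ((S ^ n) x₀) = if n = 1 then 1 else 0)
    (Sq T1q : (X ⧸ closedSpanOrbitFrom S x₀ 1) →L[ℂ] (X ⧸ closedSpanOrbitFrom S x₀ 1))
    (hSq : ∀ x : X, Sq (Submodule.Quotient.mk x) = Submodule.Quotient.mk (S x))
    (hT1q : ∀ x : X,
      T1q (Submodule.Quotient.mk x) = Submodule.Quotient.mk (T x - f x • x₀)) :
    -- (1) 𝔑 is invariant under T₁ and T⁻¹
    ((∀ x ∈ closedSpanOrbitFrom S x₀ 1, T x - f x • x₀ ∈ closedSpanOrbitFrom S x₀ 1) ∧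
     (∀ x ∈ closedSpanOrbitFrom S x₀ 1, S x ∈ closedSpanOrbitFrom S x₀ 1)) ∧
    -- (2) (T⁻¹)^𝔑 ∘ T₁^𝔑 = I on X/𝔑
    (Sq.comp T1q = ContinuousLinearMap.id ℂ (X ⧸ closedSpanOrbitFrom S x₀ 1)) ∧
    -- (3)
    (x₀ ∉ closedSpanOrbitFrom S x₀ 1 ∧
     Sq (Submodule.Quotient.mk x₀) = 0 ∧
     (Submodule.span ℂ
        (Set.range fun k : ℕ =>
          (T1q ^ k) (Submodule.Quotient.mk x₀ : X ⧸ closedSpanOrbitFrom S x₀ 1))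
       ).topologicalClosure = ⊤) := by
  have hSx₀ := apply_self_mem_closedSpanOrbitFrom_one S x₀
  refine ⟨⟨fun x => sub_smul_mem_closedSpanOrbitFrom_one hTS hf,
      fun x => apply_mem_closedSpanOrbitFrom⟩,
    comp_eq_id_of_lifts_quotient hST hSx₀ hSq hT1q,
    htrans.self_notMem_closedSpanOrbitFrom_one hTS hx₀ hN,
    by rw [hSq, Submodule.Quotient.mk_eq_zero]; exact hSx₀,
    htrans.closedCyclicSubspace_mk_eq_top hx₀ hT1q⟩

/-- Let `X` be a complex separable Banach space, `T ∈ B(X)` invertible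
(with inverse `S`) and transitive, `x₀ ≠ 0` with `𝔑 ≠ X`, `x₁*` biorthogonal to the
sequence `xₙ = T^{−n}x₀` (`⟨x₁*, xₙ⟩ = δ₁ₙ`), and `T₁ x = T x − ⟨x₁*, x⟩x₀`.  Then:
(1) `𝔑` is invariant under `T₁` and `T⁻¹`; (2) the quotient operators satisfy
`(T⁻¹)^𝔑 ∘ T₁^𝔑 = I` on `X/𝔑`; (3) `x₀ ∉ 𝔑`, `x₀ + 𝔑 ∈ ker (T⁻¹)^𝔑`, and `x₀ + 𝔑` is a
cyclic vector of `T₁^𝔑`. -/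
theorem quotient_operators_properties
    (X : Type*) [NormedAddCommGroup X] [NormedSpace ℂ X] [CompleteSpace X]
    [TopologicalSpace.SeparableSpace X]
    (T S : X →L[ℂ] X)
    (hTS : T.comp S = ContinuousLinearMap.id ℂ X)
    (hST : S.comp T = ContinuousLinearMap.id ℂ X)
    (htrans : IsTransitiveOp T)
    (x₀ : X) (hx₀ : x₀ ≠ 0)
    (hN : closedSpanOrbitFrom S x₀ 1 ≠ ⊤)
    (f : X →L[ℂ] ℂ)
    (hf : ∀ n : ℕ, 1 ≤ n → f ((S ^ n) x₀) = if n = 1 then 1 else 0)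
    (Sq T1q : (X ⧸ closedSpanOrbitFrom S x₀ 1) →L[ℂ] (X ⧸ closedSpanOrbitFrom S x₀ 1))
    (hSq : ∀ x : X, Sq (Submodule.Quotient.mk x) = Submodule.Quotient.mk (S x))
    (hT1q : ∀ x : X,
      T1q (Submodule.Quotient.mk x) = Submodule.Quotient.mk (T x - f x • x₀)) :
    -- (1) 𝔑 is invariant under T₁ and T⁻¹
    ((∀ x ∈ closedSpanOrbitFrom S x₀ 1, T x - f x • x₀ ∈ closedSpanOrbitFrom S x₀ 1) ∧
     (∀ x ∈ closedSpanOrbitFrom S x₀ 1, S x ∈ closedSpanOrbitFrom S x₀ 1)) ∧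
    -- (2) (T⁻¹)^𝔑 ∘ T₁^𝔑 = I on X/𝔑
    (Sq.comp T1q = ContinuousLinearMap.id ℂ (X ⧸ closedSpanOrbitFrom S x₀ 1)) ∧
    -- (3)
    (x₀ ∉ closedSpanOrbitFrom S x₀ 1 ∧
     Sq (Submodule.Quotient.mk x₀) = 0 ∧
     (Submodule.span ℂ
        (Set.range fun k : ℕ =>
          (T1q ^ k) (Submodule.Quotient.mk x₀ : X ⧸ closedSpanOrbitFrom S x₀ 1))
       ).topologicalClosure = ⊤) :=
  quotient_operators_properties_general X T S hTS hST htrans x₀ hx₀ hN f hf Sq T1q hSq hT1q
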